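/- Let $A$ be a left-symmetric conformal algebra. If $\omega \in C^2(A,A)$ generates a linear deformation of $A$, then $\tilde\omega$ defined by $\tilde\omega_\lambda(a,b) = \omega_\lambda(a,b) - \omega_{-\partial-\lambda}(b,a)$ generates a linear deformation of the sub-adjacent Lie conformal algebra $g(A)$: that is, $[a_\lambda b] + t\tilde\omega_\lambda(a,b)$ is a Lie conformal bracket. -/

import Mathlib

/- Encoding conventions.
A `ℂ[∂]`-module is encoded as a complex vector space `A` together with an
endomorphism `D : Module.End ℂ A` (the action of `∂`).
A polynomial `Σ cₙ λⁿ ∈ A[λ]` is encoded by its coefficient family `ℕ →₀ A`,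
and `ev l p` is its evaluation at `λ = l`.  Since `ℂ` is infinite, a polynomial
identity in the formal variables `λ, μ, …` is equivalent to the corresponding
family of identities for all complex values of the variables, which is how all
axioms are stated below.
A `λ`-product `a ⊗ b ↦ a_λ b ∈ A[λ]` is encoded as `mul : A → A → (ℕ →₀ A)`
(the coefficients of `a_λ b`), its evaluation at `λ = l` being `ev l (mul a b)`.
`substNeg D p` is the result of substituting the variable of `p` by `-∂-λ`:
it is again a polynomial in `λ` with coefficients `ℕ →₀ A`, so that
`b_{-∂-λ} a` is encoded as `substNeg D (mul b a)` (as a polynomial in `λ`). -/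

namespace LSCpaper

open Finsupp

variable {A M V : Type*} [AddCommGroup A] [Module ℂ A] [AddCommGroup M] [Module ℂ M]
  [AddCommGroup V] [Module ℂ V]

/-- Evaluation of a polynomial with coefficients in `V` at a complex number. -/
noncomputable def ev (l : ℂ) (p : ℕ →₀ V) : V := p.sum fun n c => l ^ n • c

/-- Substitution of `-∂ - λ` for the variable of `p`; the result is the
coefficient family (in `λ`) of the resulting polynomial. -/
noncomputable def substNeg (D : Module.End ℂ A) (p : ℕ →₀ A) : ℕ →₀ A :=
  p.sum fun i c => ∑ k ∈ Finset.range (i + 1),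
    Finsupp.single k ((((-1 : ℂ) ^ k * (i.choose k : ℂ))) • ((-D) ^ (i - k)) c)

/-- `ℂ`-bilinearity of a `λ`-product. -/
def Bilin (f : A → M → ℕ →₀ V) : Prop :=
  (∀ a a' b, f (a + a') b = f a b + f a' b) ∧
  (∀ (r : ℂ) (a : A) (b : M), f (r • a) b = r • f a b) ∧
  (∀ a b b', f a (b + b') = f a b + f a b') ∧
  (∀ (r : ℂ) (a : A) (b : M), f a (r • b) = r • f a b)

/-- `A` with `∂`-action `D` and `λ`-product `mul` is a left-symmetric conformal
algebra. -/
structure IsLSC (D : Module.End ℂ A) (mul : A → A → ℕ →₀ A) : Prop where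
  bilin : Bilin mul
  sesq1 : ∀ (l : ℂ) (a b : A), ev l (mul (D a) b) = (-l) • ev l (mul a b)
  sesq2 : ∀ (l : ℂ) (a b : A), ev l (mul a (D b)) = D (ev l (mul a b)) + l • ev l (mul a b)
  lsym : ∀ (l m : ℂ) (a b c : A),
    ev (l + m) (mul (ev l (mul a b)) c) - ev l (mul a (ev m (mul b c))) =
      ev (l + m) (mul (ev m (mul b a)) c) - ev m (mul b (ev l (mul a c)))

/-- `A` with `∂`-action `D` and `λ`-bracket `br` is a Lie conformal algebra. -/
structure IsLieConf (D : Module.End ℂ A) (br : A → A → ℕ →₀ A) : Prop where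
  bilin : Bilin br
  sesq1 : ∀ (l : ℂ) (a b : A), ev l (br (D a) b) = (-l) • ev l (br a b)
  sesq2 : ∀ (l : ℂ) (a b : A), ev l (br a (D b)) = D (ev l (br a b)) + l • ev l (br a b)
  skew : ∀ (l : ℂ) (a b : A), ev l (br a b) = - ev l (substNeg D (br b a))
  jacobi : ∀ (l m : ℂ) (a b c : A),
    ev l (br a (ev m (br b c))) =
      ev (l + m) (br (ev l (br a b)) c) + ev m (br b (ev l (br a c)))

/-- The evaluated bracket `[a_λ b] = a_λ b - b_{-∂-λ} a` of the sub-adjacent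
Lie conformal algebra. -/
noncomputable def brEv (D : Module.End ℂ A) (mul : A → A → ℕ →₀ A) (l : ℂ) (a b : A) : A :=
  ev l (mul a b) - ev l (substNeg D (mul b a))

end LSCpaper

/-! The deformed product `a_λ b + t ω_λ(a, b)` is left-symmetric for every `t`, and its
sub-adjacent bracket is `[a_λ b] + t ω̃_λ(a, b)`; so it suffices to show that the sub-adjacent
bracket of any left-symmetric conformal algebra is a Lie conformal bracket.

The difficulty there is that `b_{-∂-λ} a` substitutes an operator for `λ`. A polynomial with
coefficients in `A` can be evaluated at any endomorphism `T` (`∑ Tⁿ pₙ`), and since `ℂ` is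
infinite an identity holding for all complex `λ` is an identity of polynomials, which therefore
survives evaluation at `T`. Evaluating sesquilinearity and left-symmetry at `λ = -∂ - γ` in this
way gives the sesquilinearity of the bracket and three instances of left-symmetry whose sum is
the Jacobi identity. -/

namespace LSCpaper

open Finsupp

section Polynomials

variable {A B : Type*} [AddCommGroup A] [Module ℂ A] [AddCommGroup B] [Module ℂ B]

noncomputable def evOp (T : Module.End ℂ A) : (ℕ →₀ A) →ₗ[ℂ] A :=
  lsum ℂ fun n => T ^ n

@[simp]
lemma evOp_single (T : Module.End ℂ A) (n : ℕ) (c : A) : evOp T (single n c) = (T ^ n) c := by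
  simp [evOp]

lemma ev_eq_evOp (l : ℂ) (p : ℕ →₀ A) : ev l p = evOp (l • 1) p := by
  rw [ev, evOp, lsum_apply]
  exact sum_congr fun n _ => by simp [smul_pow]

lemma ev_add (l : ℂ) (p q : ℕ →₀ A) : ev l (p + q) = ev l p + ev l q := by
  simp only [ev_eq_evOp, map_add]

lemma ev_sub (l : ℂ) (p q : ℕ →₀ A) : ev l (p - q) = ev l p - ev l q := by
  simp only [ev_eq_evOp, map_sub]

lemma map_evOp (ψ : A →ₗ[ℂ] B) {S : Module.End ℂ A} {T : Module.End ℂ B}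
    (h : T ∘ₗ ψ = ψ ∘ₗ S) (q : ℕ →₀ A) :
    ψ (evOp S q) = evOp T (mapRange.linearMap ψ q) := by
  suffices ψ ∘ₗ evOp S = evOp T ∘ₗ mapRange.linearMap ψ from LinearMap.congr_fun this q
  ext n c
  simpa using (LinearMap.congr_fun (Module.End.commute_pow_left_of_commute h n) c).symm

lemma map_ev (ψ : A →ₗ[ℂ] B) (l : ℂ) (q : ℕ →₀ A) :
    ψ (ev l q) = ev l (mapRange.linearMap ψ q) := by
  rw [ev_eq_evOp, ev_eq_evOp, map_evOp ψ (S := l • 1) (T := l • 1) (by ext; simp)]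

noncomputable def mulVar : (ℕ →₀ A) →ₗ[ℂ] (ℕ →₀ A) :=
  lmapDomain A ℂ Nat.succ

lemma evOp_mulVar (T : Module.End ℂ A) (p : ℕ →₀ A) : evOp T (mulVar p) = T (evOp T p) := by
  suffices evOp T ∘ₗ mulVar = T ∘ₗ evOp T from LinearMap.congr_fun this p
  ext n c
  simp [mulVar, pow_succ']

noncomputable def substNegₗ (D : Module.End ℂ A) : (ℕ →₀ A) →ₗ[ℂ] (ℕ →₀ A) :=
  lsum ℂ fun i => ∑ k ∈ Finset.range (i + 1),
    lsingle k ∘ₗ (((-1 : ℂ) ^ k * (i.choose k : ℂ)) • (-D) ^ (i - k))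

lemma substNegₗ_apply (D : Module.End ℂ A) (p : ℕ →₀ A) :
    substNegₗ D p = substNeg D p := by
  rw [substNegₗ, lsum_apply]
  exact sum_congr fun i _ => by simp

lemma substNeg_add (D : Module.End ℂ A) (p q : ℕ →₀ A) :
    substNeg D (p + q) = substNeg D p + substNeg D q := by
  simp only [← substNegₗ_apply, map_add]

lemma substNeg_sub (D : Module.End ℂ A) (p q : ℕ →₀ A) :
    substNeg D (p - q) = substNeg D p - substNeg D q := by
  simp only [← substNegₗ_apply, map_sub]

lemma substNeg_smul (D : Module.End ℂ A) (t : ℂ) (p : ℕ →₀ A) :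
    substNeg D (t • p) = t • substNeg D p := by
  simp only [← substNegₗ_apply, map_smul]

lemma evOp_substNeg {D T : Module.End ℂ A} (h : Commute D T) (p : ℕ →₀ A) :
    evOp T (substNeg D p) = evOp (-D - T) p := by
  rw [← substNegₗ_apply]
  suffices evOp T ∘ₗ substNegₗ D = evOp (-D - T) from LinearMap.congr_fun this p
  ext n c
  have hpow := h.neg_left.neg_right.symm.add_pow n
  simp only [substNegₗ, LinearMap.coe_comp, coe_lsum, LinearMap.coe_sum, LinearMap.coe_smul,
    Function.comp_apply, lsingle_apply, Finset.sum_apply, Pi.smul_apply, map_zero, smul_zero,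
    Finset.sum_const_zero, sum_single_index, map_smul, smul_single, map_sum,
    evOp_single, sub_eq_add_neg, add_comm (-D), hpow, Module.End.mul_apply,
    Module.End.natCast_apply, LinearMap.map_smul_of_tower]
  refine Finset.sum_congr rfl fun k _ => ?_
  rw [← neg_one_smul ℂ T, smul_pow, ← Nat.cast_smul_eq_nsmul ℂ, mul_smul,
    LinearMap.smul_apply, smul_comm]

lemma eq_of_forall_ev_eq {p q : ℕ →₀ A} (h : ∀ l : ℂ, ev l p = ev l q) : p = q := by
  ext n
  rw [← sub_eq_zero, ← Module.forall_dual_apply_eq_zero_iff ℂ]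
  intro φ
  let P : Polynomial ℂ := ⟨AddMonoidAlgebra.ofCoeff (mapRange.linearMap φ (p - q))⟩
  have hP : P = 0 := Polynomial.funext fun l => by
    rw [Polynomial.eval_zero, ← map_zero φ, ← sub_eq_zero.2 (h l), ← ev_sub, map_ev φ]
    simp [P, Polynomial.eval_eq_sum, Polynomial.sum, ev, Finsupp.sum, mul_comm]
  simpa [P] using congrArg (Polynomial.coeff · n) hP

lemma commute_smul_one (c : ℂ) (T : Module.End ℂ A) : Commute (c • 1) T :=
  (Commute.one_left T).smul_left c

lemma commute_neg_sub_smul_one (D : Module.End ℂ A) (l : ℂ) : Commute D (-D - l • 1) :=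
  (Commute.refl D).neg_right.sub_right (commute_smul_one l D).symm

lemma ev_substNeg (D : Module.End ℂ A) (l : ℂ) (p : ℕ →₀ A) :
    ev l (substNeg D p) = evOp (-D - l • 1) p := by
  rw [ev_eq_evOp, evOp_substNeg (commute_smul_one l D).symm]

lemma ev_substNeg_substNeg (D : Module.End ℂ A) (l : ℂ) (p : ℕ →₀ A) :
    ev l (substNeg D (substNeg D p)) = ev l p := by
  rw [ev_substNeg, evOp_substNeg (commute_neg_sub_smul_one D l), sub_sub_cancel, ev_eq_evOp]

/-- `p(s + λ)`, written as `p(-(-s-λ))`. -/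
noncomputable def shiftVar (s : ℂ) (p : ℕ →₀ A) : ℕ →₀ A :=
  substNeg (s • 1) (substNeg 0 p)

lemma evOp_shiftVar (s : ℂ) (T : Module.End ℂ A) (p : ℕ →₀ A) :
    evOp T (shiftVar s p) = evOp (s • 1 + T) p := by
  rw [shiftVar, evOp_substNeg (commute_smul_one s T), evOp_substNeg (Commute.zero_left _),
    neg_zero, zero_sub, neg_sub, sub_neg_eq_add, add_comm]

lemma ev_shiftVar (s m : ℂ) (p : ℕ →₀ A) : ev m (shiftVar s p) = ev (s + m) p := by
  rw [ev_eq_evOp, evOp_shiftVar, ev_eq_evOp, add_smul]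

lemma map_ev_substNeg {D : Module.End ℂ A} (ψ : A →ₗ[ℂ] B) (c : ℂ)
    (hψ : ∀ w, ψ (D w) = -(c • ψ w)) (γ : ℂ) (q : ℕ →₀ A) :
    ψ (ev γ (substNeg D q)) = ψ (ev (c - γ) q) := by
  have hD : ((c - γ) • 1 : Module.End ℂ B) ∘ₗ ψ = ψ ∘ₗ (-D - γ • 1) := by
    ext w
    simp [hψ, sub_smul]
  rw [ev_substNeg, map_evOp ψ hD, map_ev, ev_eq_evOp]

end Polynomials

section Bilinear

variable {A M V : Type*} [AddCommGroup A] [Module ℂ A] [AddCommGroup M] [Module ℂ M]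
  [AddCommGroup V] [Module ℂ V] {f : A → M → ℕ →₀ V}

noncomputable def Bilin.linearMap₂ (hf : Bilin f) : A →ₗ[ℂ] M →ₗ[ℂ] ℕ →₀ V :=
  LinearMap.mk₂ ℂ f hf.1 hf.2.1 hf.2.2.1 hf.2.2.2

@[simp]
lemma Bilin.linearMap₂_apply (hf : Bilin f) (a : A) (b : M) : hf.linearMap₂ a b = f a b :=
  rfl

lemma Bilin.sub_left (hf : Bilin f) (a a' : A) (b : M) : f (a - a') b = f a b - f a' b :=
  hf.linearMap₂.map_sub₂ a a' b

lemma Bilin.sub_right (hf : Bilin f) (a : A) (b b' : M) : f a (b - b') = f a b - f a b' :=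
  map_sub (hf.linearMap₂ a) b b'

end Bilinear

section SubAdjacent

variable {A : Type*} [AddCommGroup A] [Module ℂ A]

noncomputable def subAdjBracket (D : Module.End ℂ A) (mul : A → A → ℕ →₀ A) (a b : A) :
    ℕ →₀ A :=
  mul a b - substNeg D (mul b a)

variable {D : Module.End ℂ A} {mul : A → A → ℕ →₀ A}

lemma ev_subAdjBracket (l : ℂ) (a b : A) : ev l (subAdjBracket D mul a b) = brEv D mul l a b :=
  ev_sub l _ _

namespace IsLSC

lemma mul_D_left (h : IsLSC D mul) (x y : A) : mul (D x) y = -mulVar (mul x y) :=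
  eq_of_forall_ev_eq fun l => by
    simp only [h.sesq1, ev_eq_evOp, map_neg, evOp_mulVar]
    simp

lemma mul_D_right (h : IsLSC D mul) (x y : A) :
    mul x (D y) = mapRange.linearMap D (mul x y) + mulVar (mul x y) :=
  eq_of_forall_ev_eq fun l => by
    rw [h.sesq2, ev_add, ← map_ev]
    simp only [ev_eq_evOp, evOp_mulVar]
    simp

lemma evOp_mul_D_left (h : IsLSC D mul) (T : Module.End ℂ A) (x y : A) :
    evOp T (mul (D x) y) = -T (evOp T (mul x y)) := by
  rw [h.mul_D_left, map_neg, evOp_mulVar]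

lemma evOp_mul_D_right (h : IsLSC D mul) {T : Module.End ℂ A} (hT : Commute D T) (x y : A) :
    evOp T (mul x (D y)) = D (evOp T (mul x y)) + T (evOp T (mul x y)) := by
  rw [h.mul_D_right, map_add, evOp_mulVar, ← map_evOp D hT.symm.eq]

lemma ev_substNeg_mul_D_left (h : IsLSC D mul) (l : ℂ) (a b : A) :
    ev l (substNeg D (mul (D b) a)) =
      D (ev l (substNeg D (mul b a))) + l • ev l (substNeg D (mul b a)) := by
  simp only [ev_substNeg, h.evOp_mul_D_left]
  simp [add_comm]

lemma ev_substNeg_mul_D_right (h : IsLSC D mul) (l : ℂ) (a b : A) :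
    ev l (substNeg D (mul b (D a))) = -(l • ev l (substNeg D (mul b a))) := by
  simp only [ev_substNeg, h.evOp_mul_D_right (commute_neg_sub_smul_one D l)]
  simp only [LinearMap.sub_apply, LinearMap.neg_apply, LinearMap.smul_apply, Module.End.one_apply]
  abel

lemma ev_mul_ev_substNeg (h : IsLSC D mul) (s γ : ℂ) (q : ℕ →₀ A) (z : A) :
    ev s (mul (ev γ (substNeg D q)) z) = ev s (mul (ev (s - γ) q) z) := by
  simpa [← ev_eq_evOp] using
    map_ev_substNeg (evOp (s • 1) ∘ₗ h.bilin.linearMap₂.flip z) s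
      (fun w => by simpa [← ev_eq_evOp] using h.sesq1 s w z) γ q

lemma ev_substNeg_mul_ev_substNeg (h : IsLSC D mul) (σ γ : ℂ) (q : ℕ →₀ A) (x : A) :
    ev σ (substNeg D (mul x (ev γ (substNeg D q)))) =
      ev σ (substNeg D (mul x (ev (σ - γ) q))) := by
  rw [ev_substNeg D σ, ev_substNeg D σ]
  simpa using
    map_ev_substNeg (evOp (-D - σ • 1) ∘ₗ h.bilin.linearMap₂ x) σ
      (fun w => by simpa [← ev_substNeg] using h.ev_substNeg_mul_D_right σ w x) γ q

lemma lsym_shiftVar (h : IsLSC D mul) (s : ℂ) (x y z : A) :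
    shiftVar s (mul (ev s (mul x y)) z) -
        mapRange.linearMap (evOp (s • 1) ∘ₗ h.bilin.linearMap₂ x) (mul y z) =
      shiftVar s (mul (ev s (substNeg D (mul y x))) z) - mul y (ev s (mul x z)) :=
  eq_of_forall_ev_eq fun m => by
    rw [ev_sub, ev_sub, ev_shiftVar, ev_shiftVar, ← map_ev, h.ev_mul_ev_substNeg,
      add_sub_cancel_left]
    simpa [← ev_eq_evOp] using h.lsym s m x y z

/-- Left-symmetry at `μ = -∂ - s - ν`. -/
lemma lsym_substNeg (h : IsLSC D mul) (s ν : ℂ) (x y z : A) :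
    ev ν (substNeg D (mul (ev s (mul x y)) z)) - ev s (mul x (ev ν (substNeg D (mul y z)))) =
      ev ν (substNeg D (mul (ev s (substNeg D (mul y x))) z)) -
        ev (s + ν) (substNeg D (mul y (ev s (mul x z)))) := by
  set T : Module.End ℂ A := -D - (s + ν) • 1
  have hT : s • 1 + T = -D - ν • 1 := by
    simp only [T, add_smul]
    module
  have hx : T ∘ₗ (evOp (s • 1) ∘ₗ h.bilin.linearMap₂ x) =
      (evOp (s • 1) ∘ₗ h.bilin.linearMap₂ x) ∘ₗ (-D - ν • 1) := by
    ext w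
    simp only [T, LinearMap.comp_apply, LinearMap.sub_apply, LinearMap.neg_apply,
      LinearMap.add_apply, LinearMap.smul_apply, Module.End.one_apply, map_sub, map_neg, map_smul,
      Bilin.linearMap₂_apply, ← ev_eq_evOp, h.sesq2, add_smul]
    abel
  have key := congrArg (evOp T) (h.lsym_shiftVar s x y z)
  rw [map_sub, map_sub, evOp_shiftVar, evOp_shiftVar, hT, ← map_evOp _ hx] at key
  simpa [ev_substNeg, ← ev_eq_evOp] using key

lemma brEv_jacobi (h : IsLSC D mul) (l m : ℂ) (a b c : A) :
    brEv D mul l a (brEv D mul m b c) =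
      brEv D mul (l + m) (brEv D mul l a b) c + brEv D mul m b (brEv D mul l a c) := by
  have e1 := h.ev_mul_ev_substNeg (l + m) l (mul b a) c
  have e2 := h.ev_substNeg_mul_ev_substNeg (l + m) l (mul b a) c
  rw [add_sub_cancel_left] at e1 e2
  have L0 := h.lsym l m a b c
  have L1 := h.lsym_substNeg l m a c b
  have L2 := h.lsym_substNeg m l b c a
  rw [add_comm m l] at L2
  simp only [brEv, h.bilin.sub_left, h.bilin.sub_right, substNeg_sub, ev_sub, e1, e2]
  linear_combination (norm := module) -L0 + L1 - L2

lemma bilin_subAdjBracket (h : IsLSC D mul) : Bilin (subAdjBracket D mul) := by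
  obtain ⟨add_left, smul_left, add_right, smul_right⟩ := h.bilin
  refine ⟨fun a a' b => ?_, fun r a b => ?_, fun a b b' => ?_, fun r a b => ?_⟩ <;>
    simp only [subAdjBracket, add_left, smul_left, add_right, smul_right, substNeg_add,
      substNeg_smul, smul_sub] <;>
    abel

theorem isLieConf_subAdjBracket (h : IsLSC D mul) : IsLieConf D (subAdjBracket D mul) where
  bilin := h.bilin_subAdjBracket
  sesq1 l a b := by
    simp only [ev_subAdjBracket, brEv, h.sesq1, h.ev_substNeg_mul_D_right]
    module
  sesq2 l a b := by
    simp only [ev_subAdjBracket, brEv, h.sesq2, h.ev_substNeg_mul_D_left, map_sub]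
    module
  skew l a b := by
    simp only [subAdjBracket, substNeg_sub, ev_sub, ev_substNeg_substNeg]
    abel
  jacobi l m a b c := by
    simp only [ev_subAdjBracket]
    exact h.brEv_jacobi l m a b c

end IsLSC

end SubAdjacent

theorem deformation_subadjacent_general {A : Type*} [AddCommGroup A] [Module ℂ A]
    (D : Module.End ℂ A) (mul ω : A → A → ℕ →₀ A)
    (hdef : ∀ t : ℂ, IsLSC D (fun a b => mul a b + t • ω a b)) :
    ∀ t : ℂ, IsLieConf D (fun a b =>
      (mul a b - substNeg D (mul b a)) + t • (ω a b - substNeg D (ω b a))) := by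
  intro t
  convert (hdef t).isLieConf_subAdjBracket using 1
  funext a b
  simp only [subAdjBracket, substNeg_add, substNeg_smul, smul_sub]
  abel

/-- If `ω ∈ C²(A, A)` generates a linear deformation of the
left-symmetric conformal algebra `A`, then
`ω̃_λ(a, b) = ω_λ(a, b) - ω_{-∂-λ}(b, a)` generates a linear deformation of
the sub-adjacent Lie conformal algebra `g(A)`:
`[a_λ b] + t ω̃_λ(a, b)` is a Lie conformal bracket (for every value of `t`). -/
theorem deformation_subadjacent {A : Type*} [AddCommGroup A] [Module ℂ A]
    (D : Module.End ℂ A) (mul ω : A → A → ℕ →₀ A)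
    (hA : IsLSC D mul) (hb : Bilin ω)
    (hs1 : ∀ (l : ℂ) (a b : A), ev l (ω (D a) b) = (-l) • ev l (ω a b))
    (hs2 : ∀ (l : ℂ) (a b : A), ev l (ω a (D b)) = D (ev l (ω a b)) + l • ev l (ω a b))
    (hdef : ∀ t : ℂ, IsLSC D (fun a b => mul a b + t • ω a b)) :
    ∀ t : ℂ, IsLieConf D (fun a b =>
      (mul a b - substNeg D (mul b a)) + t • (ω a b - substNeg D (ω b a))) :=
  deformation_subadjacent_general D mul ω hdef

end LSCpaper
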